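/- Given a full-rank m×M matrix Ψ with SVD Ψ = UΣVᵀ, the matrix √α · U V' (where V' consists of the first m columns of V) equals √α (ΨΨᵀ)^{-1/2} Ψ and is an α-tight frame, i.e., its frame operator equals α·I_m. Moreover it minimizes ‖Ψ − T‖_F over all α-tight frames T. -/

import Mathlib

open Matrix BigOperators Finset

noncomputable def frob {m M : ℕ} (A : Matrix (Fin m) (Fin M) ℝ) : ℝ :=
  Real.sqrt (∑ i, ∑ j, (A i j) ^ 2)

/-!
Write the SVD as `Ψ = U Σ W`, where `W` consists of the first `m` rows of `Vᵀ` and so has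
orthonormal rows. Then `ΨΨᵀ = U Σ² Uᵀ`, and by uniqueness of positive semidefinite square roots
`(ΨΨᵀ)^{-1/2} = U Σ⁻¹ Uᵀ`, whence `(ΨΨᵀ)^{-1/2} Ψ = U W`, which has orthonormal rows.

For optimality, `Ψ = P T₀` is a polar decomposition with `T₀ = √α U W` and
`P = U Σ Uᵀ / √α ⪰ 0`. For every `T` with `T Tᵀ = T₀ T₀ᵀ`, expanding the squares gives
`‖P T₀ - T‖² - ‖P T₀ - T₀‖² = tr (P (T₀ - T) (T₀ - T)ᵀ) ≥ 0`.
-/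

namespace Matrix

lemma submatrix_mul_transpose_submatrix_eq_one {m n : Type*} [Fintype n] [DecidableEq m]
    [DecidableEq n] {V : Matrix n n ℝ} (hV : Vᵀ * V = 1) {κ : m → n}
    (hκ : Function.Injective κ) :
    Vᵀ.submatrix κ id * (Vᵀ.submatrix κ id)ᵀ = 1 := by
  rw [transpose_submatrix, transpose_transpose, ← submatrix_mul _ _ _ _ _ Function.bijective_id,
    hV, submatrix_one _ hκ]

variable {m n : Type*} [Fintype m]

section Conjugation

variable [DecidableEq m] {U : Matrix m m ℝ}

lemma conj_diagonal_mul_conj_diagonal (hU : Uᵀ * U = 1) (d e : m → ℝ) :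
    U * diagonal d * Uᵀ * (U * diagonal e * Uᵀ) = U * diagonal (d * e) * Uᵀ := by
  calc _ = U * diagonal d * (Uᵀ * U) * diagonal e * Uᵀ := by simp only [Matrix.mul_assoc]
    _ = _ := by rw [hU, Matrix.mul_one, Matrix.mul_assoc U, diagonal_mul_diagonal]; rfl

lemma posSemidef_conj_diagonal {d : m → ℝ} (hd : ∀ i, 0 ≤ d i) (U : Matrix m m ℝ) :
    (U * diagonal d * Uᵀ).PosSemidef := by
  simpa using (posSemidef_diagonal_iff.mpr hd).mul_mul_conjTranspose_same U

lemma conj_diagonal_inv_mul (hU : Uᵀ * U = 1) {σ : m → ℝ} (hσ : ∀ i, σ i ≠ 0)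
    (W : Matrix m n ℝ) : U * diagonal σ⁻¹ * Uᵀ * (U * diagonal σ * W) = U * W := by
  have hσσ : σ⁻¹ * σ = fun _ => 1 := funext fun i => inv_mul_cancel₀ (hσ i)
  calc _ = U * diagonal σ⁻¹ * (Uᵀ * U) * diagonal σ * W := by simp only [Matrix.mul_assoc]
    _ = _ := by
      rw [hU, Matrix.mul_one, Matrix.mul_assoc U, diagonal_mul_diagonal, ← Pi.mul_def, hσσ,
        diagonal_one, Matrix.mul_one]

end Conjugation

variable [Fintype n]

lemma sum_sq_eq_trace_mul_transpose (A : Matrix m n ℝ) :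
    ∑ i, ∑ j, A i j ^ 2 = (A * Aᵀ).trace := by
  simp [trace, mul_apply, sq]

lemma trace_sub_mul_transpose_sub (A B : Matrix m n ℝ) :
    ((A - B) * (A - B)ᵀ).trace = (A * Aᵀ).trace - 2 * (A * Bᵀ).trace + (B * Bᵀ).trace := by
  have hBA : (B * Aᵀ).trace = (A * Bᵀ).trace := by
    rw [← trace_transpose, transpose_mul, transpose_transpose]
  rw [transpose_sub, Matrix.sub_mul, Matrix.mul_sub, Matrix.mul_sub, trace_sub, trace_sub,
    trace_sub, hBA]
  ring

lemma PosSemidef.trace_mul_mul_transpose_nonneg {P : Matrix m m ℝ} (hP : P.PosSemidef)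
    (X : Matrix m n ℝ) : 0 ≤ (P * X * Xᵀ).trace := by
  rw [trace_mul_cycle]
  simpa using (hP.conjTranspose_mul_mul_same X).trace_nonneg

lemma PosSemidef.trace_mul_mul_transpose_le {P : Matrix m m ℝ} (hP : P.PosSemidef)
    {T₀ T : Matrix m n ℝ} (hT : T * Tᵀ = T₀ * T₀ᵀ) :
    (P * T₀ * Tᵀ).trace ≤ (P * T₀ * T₀ᵀ).trace := by
  have hPt : Pᵀ = P := by simpa using hP.isHermitian.eq
  have hswap : (P * T * T₀ᵀ).trace = (P * T₀ * Tᵀ).trace := by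
    rw [← trace_transpose, transpose_mul, transpose_mul, transpose_transpose, hPt,
      ← Matrix.mul_assoc, trace_mul_cycle]
  have h := hP.trace_mul_mul_transpose_nonneg (T₀ - T)
  simp only [Matrix.mul_assoc, transpose_sub, Matrix.sub_mul, Matrix.mul_sub, hT, trace_sub]
    at h hswap ⊢
  linarith

lemma PosSemidef.trace_sub_mul_transpose_sub_le {P : Matrix m m ℝ} (hP : P.PosSemidef)
    {T₀ T : Matrix m n ℝ} (hT : T * Tᵀ = T₀ * T₀ᵀ) :
    ((P * T₀ - T₀) * (P * T₀ - T₀)ᵀ).trace ≤ ((P * T₀ - T) * (P * T₀ - T)ᵀ).trace := by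
  rw [trace_sub_mul_transpose_sub, trace_sub_mul_transpose_sub, hT]
  linarith [hP.trace_mul_mul_transpose_le hT]

lemma mul_eq_diagonal_mul_submatrix [DecidableEq m] {p : Type*} {S : Matrix m n ℝ} {κ : m → n}
    (hS : ∀ i k, k ≠ κ i → S i k = 0) (N : Matrix n p ℝ) :
    S * N = diagonal (fun i => S i (κ i)) * N.submatrix κ id := by
  ext i j
  rw [mul_apply, diagonal_mul, submatrix_apply, id,
    Finset.sum_eq_single (κ i) (fun k _ hk => by rw [hS i k hk, zero_mul]) (by simp)]

section ThinSVD

variable [DecidableEq m] {U : Matrix m m ℝ} {W : Matrix m n ℝ} {σ : m → ℝ}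

lemma mul_transpose_eq_conj_diagonal (hW : W * Wᵀ = 1) :
    U * diagonal σ * W * (U * diagonal σ * W)ᵀ = U * diagonal (σ * σ) * Uᵀ := by
  rw [transpose_mul, transpose_mul, diagonal_transpose]
  calc _ = U * diagonal σ * (W * Wᵀ) * diagonal σ * Uᵀ := by simp only [Matrix.mul_assoc]
    _ = _ := by rw [hW, Matrix.mul_one, Matrix.mul_assoc U, diagonal_mul_diagonal]; rfl

lemma eq_conj_diagonal_inv_of_mul_self_eq_inv (hU : Uᵀ * U = 1) (hW : W * Wᵀ = 1)
    (hσ : ∀ i, 0 < σ i) {R : Matrix m m ℝ} (hR : R.PosSemidef)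
    (hRR : R * R = (U * diagonal σ * W * (U * diagonal σ * W)ᵀ)⁻¹) :
    R = U * diagonal σ⁻¹ * Uᵀ := by
  have hR₀ : (U * diagonal σ⁻¹ * Uᵀ).PosSemidef :=
    posSemidef_conj_diagonal (fun i => (inv_pos.2 (hσ i)).le) U
  have hsq : U * diagonal σ⁻¹ * Uᵀ * (U * diagonal σ⁻¹ * Uᵀ) =
      (U * diagonal σ * W * (U * diagonal σ * W)ᵀ)⁻¹ := by
    rw [mul_transpose_eq_conj_diagonal hW, conj_diagonal_mul_conj_diagonal hU]
    refine (inv_eq_left_inv ?_).symm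
    have hσσ : σ⁻¹ * σ⁻¹ * (σ * σ) = fun _ => 1 := funext fun i => by
      simp only [Pi.mul_apply, Pi.inv_apply]; field_simp [(hσ i).ne']
    rw [conj_diagonal_mul_conj_diagonal hU, hσσ, diagonal_one, Matrix.mul_one,
      mul_eq_one_comm.mp hU]
  open scoped MatrixOrder in
  exact (CFC.sq_eq_sq_iff R _ hR.nonneg hR₀.nonneg).mp (by rw [sq, sq, hRR, hsq])

end ThinSVD

end Matrix

theorem nearest_tight_frame_general {m M : ℕ} (hmM : m ≤ M)
    (Ψ : Matrix (Fin m) (Fin M) ℝ)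
    (α : ℝ) (hα : 0 < α)
    (U : Matrix (Fin m) (Fin m) ℝ) (S : Matrix (Fin m) (Fin M) ℝ)
    (V : Matrix (Fin M) (Fin M) ℝ)
    (hU : Uᵀ * U = 1) (hV : Vᵀ * V = 1)
    (hS : ∀ (i : Fin m) (j : Fin M), (i : ℕ) ≠ (j : ℕ) → S i j = 0)
    (hSpos : ∀ (i : Fin m) (j : Fin M), (i : ℕ) = (j : ℕ) → 0 < S i j)
    (hSVD : Ψ = U * S * Vᵀ)
    (R : Matrix (Fin m) (Fin m) ℝ) (hRpd : R.PosDef)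
    (hR : R * R = (Ψ * Ψᵀ)⁻¹)
    (W : Matrix (Fin m) (Fin M) ℝ)
    (hW : ∀ (i : Fin m) (j : Fin M), W i j = V j (Fin.castLE hmM i)) :
    Real.sqrt α • (U * W) = Real.sqrt α • (R * Ψ) ∧
    (Real.sqrt α • (U * W)) * (Real.sqrt α • (U * W))ᵀ =
      α • (1 : Matrix (Fin m) (Fin m) ℝ) ∧
    (∀ T : Matrix (Fin m) (Fin M) ℝ, T * Tᵀ = α • (1 : Matrix (Fin m) (Fin m) ℝ) →
      frob (Ψ - Real.sqrt α • (U * W)) ≤ frob (Ψ - T)) := by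
  set κ : Fin m → Fin M := Fin.castLE hmM
  set σ : Fin m → ℝ := fun i => S i (κ i)
  have hσ : ∀ i, 0 < σ i := fun i => hSpos i (κ i) rfl
  have hWκ : W = Vᵀ.submatrix κ id := by ext i j; simp [hW, κ]
  have hWW : W * Wᵀ = 1 :=
    hWκ ▸ submatrix_mul_transpose_submatrix_eq_one hV (Fin.castLE_injective hmM)
  have hΨ : Ψ = U * diagonal σ * W := by
    have hSκ : ∀ i k, k ≠ κ i → S i k = 0 := fun i k hk => hS i k fun h => hk (Fin.ext h.symm)
    rw [hSVD, Matrix.mul_assoc, mul_eq_diagonal_mul_submatrix hSκ, hWκ, ← Matrix.mul_assoc]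
  have hRΨ : R * Ψ = U * W := by
    rw [eq_conj_diagonal_inv_of_mul_self_eq_inv hU hWW hσ hRpd.posSemidef (hΨ ▸ hR), hΨ,
      conj_diagonal_inv_mul hU fun i => (hσ i).ne']
  have hframe : (U * W) * (U * W)ᵀ = 1 := by
    rw [transpose_mul, Matrix.mul_assoc, ← Matrix.mul_assoc W, hWW, Matrix.one_mul,
      mul_eq_one_comm.mp hU]
  have htight : (√α • (U * W)) * (√α • (U * W))ᵀ = α • 1 := by
    rw [transpose_smul, Matrix.smul_mul, Matrix.mul_smul, hframe, smul_smul,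
      Real.mul_self_sqrt hα.le]
  refine ⟨by rw [hRΨ], htight, fun T hT => ?_⟩
  have hP : ((√α)⁻¹ • (U * diagonal σ * Uᵀ)).PosSemidef :=
    (posSemidef_conj_diagonal (fun i => (hσ i).le) U).smul (by positivity)
  have hpolar : Ψ = ((√α)⁻¹ • (U * diagonal σ * Uᵀ)) * (√α • (U * W)) := by
    rw [Matrix.smul_mul, Matrix.mul_smul, smul_smul, inv_mul_cancel₀ (Real.sqrt_pos.2 hα).ne',
      one_smul, Matrix.mul_assoc (U * _), ← Matrix.mul_assoc Uᵀ, hU, Matrix.one_mul, hΨ]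
  simp only [frob, sum_sq_eq_trace_mul_transpose]
  rw [hpolar]
  exact Real.sqrt_le_sqrt (hP.trace_sub_mul_transpose_sub_le (hT.trans htight.symm))

/-- Nearest α-tight frame: for a full-rank `Ψ` with SVD `Ψ = U Σ Vᵀ`, the matrix
`√α · U V'ᵀ` (with `V'` the first `m` columns of `V`) equals `√α (ΨΨᵀ)^{-1/2} Ψ`,
is an `α`-tight frame, and minimizes the Frobenius distance to `Ψ` over all
`α`-tight frames. -/
theorem nearest_tight_frame {m M : ℕ} (hmM : m ≤ M)
    (Ψ : Matrix (Fin m) (Fin M) ℝ) (hrank : Ψ.rank = m)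
    (α : ℝ) (hα : 0 < α)
    (U : Matrix (Fin m) (Fin m) ℝ) (S : Matrix (Fin m) (Fin M) ℝ)
    (V : Matrix (Fin M) (Fin M) ℝ)
    (hU : Uᵀ * U = 1) (hV : Vᵀ * V = 1)
    (hS : ∀ (i : Fin m) (j : Fin M), (i : ℕ) ≠ (j : ℕ) → S i j = 0)
    (hSpos : ∀ (i : Fin m) (j : Fin M), (i : ℕ) = (j : ℕ) → 0 < S i j)
    (hSVD : Ψ = U * S * Vᵀ)
    (R : Matrix (Fin m) (Fin m) ℝ) (hRpd : R.PosDef)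
    (hR : R * R = (Ψ * Ψᵀ)⁻¹)
    (W : Matrix (Fin m) (Fin M) ℝ)
    (hW : ∀ (i : Fin m) (j : Fin M), W i j = V j (Fin.castLE hmM i)) :
    Real.sqrt α • (U * W) = Real.sqrt α • (R * Ψ) ∧
    (Real.sqrt α • (U * W)) * (Real.sqrt α • (U * W))ᵀ =
      α • (1 : Matrix (Fin m) (Fin m) ℝ) ∧
    (∀ T : Matrix (Fin m) (Fin M) ℝ, T * Tᵀ = α • (1 : Matrix (Fin m) (Fin m) ℝ) →
      frob (Ψ - Real.sqrt α • (U * W)) ≤ frob (Ψ - T)) :=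
  nearest_tight_frame_general hmM Ψ α hα U S V hU hV hS hSpos hSVD R hRpd hR W hW
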